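/- arXiv:1903.11804 — 7 statements merged into one kernel-verified Lean document; each statement's English description precedes it below -/
import Mathlib

section
/- The derivative of H satisfies H'(z) = (2/(σ²z²)) · (rκ + (μ-r)z)/(w·s'(z)) · G(z) for all z ∈ (0,∞), where w = 2√(ν²+2(λ+r)/σ²) and s'(z) = z^{-2ν-1}. -/
open Real Set Filter Topology

/-!
Let `L = (σ²z²/2) d²/dz² + μz d/dz` be the generator of geometric Brownian motion. The scale
density solves `s'' = -(2μz / σ²z²) s'`, so Lagrange's identity gives
`((F'G - FG') / s')' = (2 / σ²z²) (G·LF - F·LG) / s'`. The powers `z^(±θ-ν)` are eigenfunctions of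
`L` with eigenvalue `λ + r`, hence so is `G`, while `LF - (λ + r)F = rκ + (μ - r)z`.
-/

def HasGeneratorAt (a b : ℝ) (u : ℝ → ℝ) (Lu z : ℝ) : Prop :=
  ∃ u' : ℝ → ℝ, ∃ u'' : ℝ, (∀ᶠ x in 𝓝 z, HasDerivAt u (u' x) x) ∧ HasDerivAt u' u'' z ∧
    a / 2 * u'' + b * u' z = Lu

namespace HasGeneratorAt

variable {a b z Lu Lv : ℝ} {u v : ℝ → ℝ}

theorem congr_value {Lu' : ℝ} (hu : HasGeneratorAt a b u Lu z) (h : Lu = Lu') :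
    HasGeneratorAt a b u Lu' z :=
  h ▸ hu

theorem const_mul (c : ℝ) (hu : HasGeneratorAt a b u Lu z) :
    HasGeneratorAt a b (fun x => c * u x) (c * Lu) z := by
  obtain ⟨u', u'', hu', hu'', hLu⟩ := hu
  refine ⟨fun x => c * u' x, c * u'', hu'.mono fun x hx => hx.const_mul c,
    hu''.const_mul c, ?_⟩
  rw [← hLu]
  ring

theorem sub (hu : HasGeneratorAt a b u Lu z) (hv : HasGeneratorAt a b v Lv z) :
    HasGeneratorAt a b (fun x => u x - v x) (Lu - Lv) z := by
  obtain ⟨u', u'', hu', hu'', hLu⟩ := hu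
  obtain ⟨v', v'', hv', hv'', hLv⟩ := hv
  refine ⟨fun x => u' x - v' x, u'' - v'', (hu'.and hv').mono fun x hx => hx.1.sub hx.2,
    hu''.sub hv'', ?_⟩
  rw [← hLu, ← hLv]
  ring

/-- Lagrange's identity, with `m` a scale density of the generator. -/
theorem hasDerivAt_wronskian_div {m : ℝ → ℝ} (hu : HasGeneratorAt a b u Lu z)
    (hv : HasGeneratorAt a b v Lv z) (ha : a ≠ 0) (hm : m z ≠ 0)
    (hm' : HasDerivAt m (-(2 * b / a) * m z) z) :
    HasDerivAt (fun x => (deriv u x * v x - u x * deriv v x) / m x)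
      (2 / a * (v z * Lu - u z * Lv) / m z) z := by
  obtain ⟨u', u'', hu', hu'', hLu⟩ := hu
  obtain ⟨v', v'', hv', hv'', hLv⟩ := hv
  have hdu : deriv u =ᶠ[𝓝 z] u' := hu'.mono fun x hx => hx.deriv
  have hdv : deriv v =ᶠ[𝓝 z] v' := hv'.mono fun x hx => hx.deriv
  have hW := (((hu''.congr_of_eventuallyEq hdu).mul hv'.self_of_nhds).sub
    (hu'.self_of_nhds.mul (hv''.congr_of_eventuallyEq hdv))).div hm' hm
  refine hW.congr_deriv ?_
  simp only [Pi.sub_apply, Pi.mul_apply]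
  rw [← hLu, ← hLv, hdu.eq_of_nhds, hdv.eq_of_nhds]
  field_simp
  ring

end HasGeneratorAt

theorem hasGeneratorAt_affine (a b k l z : ℝ) :
    HasGeneratorAt a b (fun x => k * x - l) (b * k) z := by
  refine ⟨fun _ => k, 0, Eventually.of_forall fun x => ?_, hasDerivAt_const z k, by ring⟩
  simpa using ((hasDerivAt_id x).const_mul k).sub_const l

theorem hasGeneratorAt_rpow (a b p : ℝ) {z : ℝ} (hz : 0 < z) :
    HasGeneratorAt a b (fun x => x ^ p)
      (a / 2 * (p * ((p - 1) * z ^ (p - 1 - 1))) + b * (p * z ^ (p - 1))) z :=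
  ⟨fun x => p * x ^ (p - 1), p * ((p - 1) * z ^ (p - 1 - 1)),
    (eventually_gt_nhds hz).mono fun _ hx => hasDerivAt_rpow_const (Or.inl (ne_of_gt hx)),
    (hasDerivAt_rpow_const (Or.inl hz.ne')).const_mul p, rfl⟩

theorem hasGeneratorAt_rpow_gbm (σ μ p : ℝ) {z : ℝ} (hz : 0 < z) :
    HasGeneratorAt (σ ^ 2 * z ^ 2) (μ * z) (fun x => x ^ p)
      ((σ ^ 2 / 2 * p * (p - 1) + μ * p) * z ^ p) z := by
  refine (hasGeneratorAt_rpow _ _ p hz).congr_value ?_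
  rw [sub_sub, rpow_sub hz, rpow_sub hz, rpow_one, one_add_one_eq_two, rpow_two]
  field_simp

section GeometricBrownianMotion

variable {σ μ ν : ℝ} (hσ : σ ≠ 0) (hν : ν = μ / σ ^ 2 - 1 / 2)
include hσ hν

theorem gbm_indicial_eq {β p : ℝ} (hp : (p + ν) ^ 2 = ν ^ 2 + 2 * β / σ ^ 2) :
    σ ^ 2 / 2 * p * (p - 1) + μ * p = β := by
  have h : σ ^ 2 / 2 * p * (p - 1) + μ * p - β =
      σ ^ 2 / 2 * ((p + ν) ^ 2 - (ν ^ 2 + 2 * β / σ ^ 2)) := by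
    rw [hν]
    field_simp
    ring
  rwa [hp, sub_self, mul_zero, sub_eq_zero] at h

theorem hasGeneratorAt_gbm_eigenfunction {β θ : ℝ} (hθ : θ ^ 2 = ν ^ 2 + 2 * β / σ ^ 2)
    (A B : ℝ) {z : ℝ} (hz : 0 < z) :
    HasGeneratorAt (σ ^ 2 * z ^ 2) (μ * z) (fun x => A * x ^ (θ - ν) - B * x ^ (-θ - ν))
      (β * (A * z ^ (θ - ν) - B * z ^ (-θ - ν))) z := by
  refine (((hasGeneratorAt_rpow_gbm σ μ _ hz).const_mul A).sub
    ((hasGeneratorAt_rpow_gbm σ μ _ hz).const_mul B)).congr_value ?_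
  rw [gbm_indicial_eq hσ hν (β := β) (by rw [← hθ]; ring),
    gbm_indicial_eq hσ hν (β := β) (by rw [← hθ]; ring)]
  ring

theorem hasDerivAt_gbm_scale_density (C : ℝ) {z : ℝ} (hz : 0 < z) :
    HasDerivAt (fun x => C * x ^ (-2 * ν - 1))
      (-(2 * (μ * z) / (σ ^ 2 * z ^ 2)) * (C * z ^ (-2 * ν - 1))) z := by
  refine ((hasDerivAt_rpow_const (Or.inl hz.ne')).const_mul C).congr_deriv ?_
  rw [rpow_sub hz _ 1, rpow_one, hν]
  field_simp
  ring

end GeometricBrownianMotion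

theorem stmt_4_general (μ σ r lam κ c : ℝ) (hσ : 0 < σ)
    (hlr : max μ 0 < lam + r)
    (ν : ℝ) (hν : ν = μ / σ ^ 2 - 1 / 2)
    (φ ψ F G s' H : ℝ → ℝ) (w : ℝ)
    (hφ : ∀ x : ℝ, φ x = x ^ (-Real.sqrt (ν ^ 2 + 2 * (lam + r) / σ ^ 2) - ν))
    (hψ : ∀ x : ℝ, ψ x = x ^ (Real.sqrt (ν ^ 2 + 2 * (lam + r) / σ ^ 2) - ν))
    (hF : ∀ z : ℝ, F z = ((r - μ) / (lam + r - μ)) * z - r * κ / (lam + r))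
    (hG : ∀ z : ℝ, G z = φ (κ + c) * ψ z - φ z * ψ (κ + c))
    (hw : w = 2 * Real.sqrt (ν ^ 2 + 2 * (lam + r) / σ ^ 2))
    (hs : ∀ z : ℝ, s' z = z ^ (-2 * ν - 1))
    (hH : ∀ z : ℝ, H z = (deriv F z * G z - F z * deriv G z) / (w * s' z) + F (κ + c)) :
    ∀ z ∈ Set.Ioi (0 : ℝ),
      deriv H z = (2 / (σ ^ 2 * z ^ 2)) * ((r * κ + (μ - r) * z) / (w * s' z)) * G z := by
  intro z (hz : 0 < z)
  have hβ : 0 < lam + r := (le_max_right μ 0).trans_lt hlr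
  have hβμ : lam + r - μ ≠ 0 := sub_ne_zero.2 ((le_max_left μ 0).trans_lt hlr).ne'
  have hD : 0 < ν ^ 2 + 2 * (lam + r) / σ ^ 2 :=
    add_pos_of_nonneg_of_pos (sq_nonneg ν) (div_pos (mul_pos two_pos hβ) (pow_pos hσ 2))
  have hGgen : HasGeneratorAt (σ ^ 2 * z ^ 2) (μ * z) G ((lam + r) * G z) z := by
    have hGpow : G = fun x => φ (κ + c) * x ^ (√(ν ^ 2 + 2 * (lam + r) / σ ^ 2) - ν) -
        ψ (κ + c) * x ^ (-√(ν ^ 2 + 2 * (lam + r) / σ ^ 2) - ν) :=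
      funext fun x => by rw [hG, hψ x, hφ x]; ring
    rw [hGpow]
    exact hasGeneratorAt_gbm_eigenfunction hσ.ne' hν (sq_sqrt hD.le) _ _ hz
  have hFgen : HasGeneratorAt (σ ^ 2 * z ^ 2) (μ * z) F (μ * z * ((r - μ) / (lam + r - μ))) z :=
    funext hF ▸ hasGeneratorAt_affine _ _ _ _ z
  have hm : HasDerivAt (fun x => w * s' x) (-(2 * (μ * z) / (σ ^ 2 * z ^ 2)) * (w * s' z)) z := by
    simpa only [funext hs] using hasDerivAt_gbm_scale_density hσ.ne' hν w hz
  have hw0 : w ≠ 0 := by rw [hw]; exact mul_ne_zero two_ne_zero (sqrt_pos.2 hD).ne'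
  have hs0 : s' z ≠ 0 := by rw [hs]; exact (rpow_pos_of_pos hz _).ne'
  have hHz : HasDerivAt H (2 / (σ ^ 2 * z ^ 2) *
      (G z * (μ * z * ((r - μ) / (lam + r - μ))) - F z * ((lam + r) * G z)) / (w * s' z)) z := by
    rw [funext hH]
    exact (hFgen.hasDerivAt_wronskian_div (m := fun x => w * s' x) hGgen (by positivity)
      (mul_ne_zero hw0 hs0) hm).add_const _
  rw [hHz.deriv, hF z]
  field_simp
  ring

theorem stmt_4 (μ σ r lam κ c : ℝ) (hσ : 0 < σ) (hlam : 0 < lam) (hκ : 0 < κ) (hc : 0 ≤ c)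
    (hlr : max μ 0 < lam + r)
    (ν : ℝ) (hν : ν = μ / σ ^ 2 - 1 / 2)
    (φ ψ F G s' H : ℝ → ℝ) (w : ℝ)
    (hφ : ∀ x : ℝ, φ x = x ^ (-Real.sqrt (ν ^ 2 + 2 * (lam + r) / σ ^ 2) - ν))
    (hψ : ∀ x : ℝ, ψ x = x ^ (Real.sqrt (ν ^ 2 + 2 * (lam + r) / σ ^ 2) - ν))
    (hF : ∀ z : ℝ, F z = ((r - μ) / (lam + r - μ)) * z - r * κ / (lam + r))
    (hG : ∀ z : ℝ, G z = φ (κ + c) * ψ z - φ z * ψ (κ + c))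
    (hw : w = 2 * Real.sqrt (ν ^ 2 + 2 * (lam + r) / σ ^ 2))
    (hs : ∀ z : ℝ, s' z = z ^ (-2 * ν - 1))
    (hH : ∀ z : ℝ, H z = (deriv F z * G z - F z * deriv G z) / (w * s' z) + F (κ + c))
    (hr : 0 ≤ r) :
    ∀ z ∈ Set.Ioi (0 : ℝ),
      deriv H z = (2 / (σ ^ 2 * z ^ 2)) * ((r * κ + (μ - r) * z) / (w * s' z)) * G z :=
  stmt_4_general μ σ r lam κ c hσ hlr ν hν φ ψ F G s' H w hφ hψ hF hG hw hs hH
end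

section
/- The function H has a root at z = κ+c which is also a stationary point: H(κ+c) = 0 and H'(κ+c) = 0. -/
open Real Filter Topology

/-!
Write `W = w s'`. The Wronskian `φ ψ' - φ' ψ` of the two power solutions equals `W` identically, so
`G(κ+c) = 0`, `G'(κ+c) = W(κ+c)` and `G''(κ+c) = W'(κ+c)`. Since `F` is affine, the numerator
`F' G - F G'` therefore agrees with `-F(κ+c) W` to first order at `κ+c`, and `H` has a double
root there.
-/

theorem eq_zero_and_deriv_eq_zero_of_hasDerivAt_wronskian {F G G' W H : ℝ → ℝ} {m g₂ a : ℝ}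
    (hF : ∀ z, HasDerivAt F m z) (hG : ∀ᶠ z in 𝓝 a, HasDerivAt G (G' z) z)
    (hG' : HasDerivAt G' g₂ a) (hW : HasDerivAt W g₂ a) (hGa : G a = 0) (hG'a : G' a = W a)
    (hWa : W a ≠ 0) (hH : ∀ z, H z = (deriv F z * G z - F z * deriv G z) / W z + F a) :
    H a = 0 ∧ deriv H a = 0 := by
  have hGa' : HasDerivAt G (G' a) a := hG.self_of_nhds
  have hH_near : H =ᶠ[𝓝 a] fun z => (m * G z - F z * G' z) / W z + F a := by
    filter_upwards [hG] with z hz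
    rw [hH, (hF z).deriv, hz.deriv]
  have hN : HasDerivAt (fun z => m * G z - F z * G' z) (m * G' a - (m * G' a + F a * g₂)) a :=
    (hGa'.const_mul m).sub ((hF a).mul hG')
  constructor
  · rw [hH, (hF a).deriv, hGa'.deriv, hGa, hG'a]
    field_simp
    ring
  · have hH' : HasDerivAt (fun z => (m * G z - F z * G' z) / W z + F a)
        ((((m * G' a - (m * G' a + F a * g₂)) * W a - (m * G a - F a * G' a) * g₂) / W a ^ 2)) a :=
      (hN.div hW hWa).add_const (F a)
    rw [hH_near.deriv_eq, hH'.deriv, hGa, hG'a]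
    field_simp
    ring

section RpowCrossDifference

variable {a p q : ℝ}

theorem hasDerivAt_rpow_cross_sub {z : ℝ} (hz : 0 < z) :
    HasDerivAt (fun z => a ^ p * z ^ q - z ^ p * a ^ q)
      (a ^ p * (q * z ^ (q - 1)) - p * z ^ (p - 1) * a ^ q) z :=
  ((hasDerivAt_rpow_const (Or.inl hz.ne')).const_mul _).sub
    ((hasDerivAt_rpow_const (Or.inl hz.ne')).mul_const _)

theorem rpow_cross_sub_deriv_self (ha : 0 < a) :
    a ^ p * (q * a ^ (q - 1)) - p * a ^ (p - 1) * a ^ q = (q - p) * a ^ (p + q - 1) := by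
  have e₁ : a ^ p * a ^ (q - 1) = a ^ (p + q - 1) := by rw [← rpow_add ha]; ring_nf
  have e₂ : a ^ (p - 1) * a ^ q = a ^ (p + q - 1) := by rw [← rpow_add ha]; ring_nf
  linear_combination q * e₁ - p * e₂

theorem hasDerivAt_rpow_cross_sub_deriv (ha : 0 < a) :
    HasDerivAt (fun z => a ^ p * (q * z ^ (q - 1)) - p * z ^ (p - 1) * a ^ q)
      ((q - p) * ((p + q - 1) * a ^ (p + q - 1 - 1))) a := by
  have e₁ : a ^ p * a ^ (q - 1 - 1) = a ^ (p + q - 1 - 1) := by rw [← rpow_add ha]; ring_nf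
  have e₂ : a ^ (p - 1 - 1) * a ^ q = a ^ (p + q - 1 - 1) := by rw [← rpow_add ha]; ring_nf
  refine ((((hasDerivAt_rpow_const (Or.inl ha.ne')).const_mul q).const_mul (a ^ p)).sub
    (((hasDerivAt_rpow_const (Or.inl ha.ne')).const_mul p).mul_const (a ^ q))).congr_deriv ?_
  linear_combination q * (q - 1) * e₁ - p * (p - 1) * e₂

end RpowCrossDifference

theorem stmt_5_general (μ σ r lam κ c : ℝ) (hσ : 0 < σ) (hκ : 0 < κ) (hc : 0 ≤ c)
    (hlr : max μ 0 < lam + r)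
    (ν : ℝ)
    (φ ψ F G s' H : ℝ → ℝ) (w : ℝ)
    (hφ : ∀ x : ℝ, φ x = x ^ (-Real.sqrt (ν ^ 2 + 2 * (lam + r) / σ ^ 2) - ν))
    (hψ : ∀ x : ℝ, ψ x = x ^ (Real.sqrt (ν ^ 2 + 2 * (lam + r) / σ ^ 2) - ν))
    (hF : ∀ z : ℝ, F z = ((r - μ) / (lam + r - μ)) * z - r * κ / (lam + r))
    (hG : ∀ z : ℝ, G z = φ (κ + c) * ψ z - φ z * ψ (κ + c))
    (hw : w = 2 * Real.sqrt (ν ^ 2 + 2 * (lam + r) / σ ^ 2))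
    (hs : ∀ z : ℝ, s' z = z ^ (-2 * ν - 1))
    (hH : ∀ z : ℝ, H z = (deriv F z * G z - F z * deriv G z) / (w * s' z) + F (κ + c)) :
    H (κ + c) = 0 ∧ deriv H (κ + c) = 0 := by
  set a := κ + c
  set β := √(ν ^ 2 + 2 * (lam + r) / σ ^ 2)
  have ha : 0 < a := add_pos_of_pos_of_nonneg hκ hc
  have hβ : 0 < β := by
    have : 0 < lam + r := (le_max_right μ 0).trans_lt hlr
    exact sqrt_pos.mpr (by positivity)
  have hG_eq : G = fun z => a ^ (-β - ν) * z ^ (β - ν) - z ^ (-β - ν) * a ^ (β - ν) :=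
    funext fun z => by rw [hG, hφ, hφ, hψ, hψ]
  have hW_eq : (fun z => w * s' z) =
      fun z => ((β - ν) - (-β - ν)) * z ^ ((-β - ν) + (β - ν) - 1) :=
    funext fun z => by rw [hw, hs]; ring_nf
  have hF_deriv (z : ℝ) : HasDerivAt F ((r - μ) / (lam + r - μ)) z := by
    rw [funext hF]
    simpa using
      ((hasDerivAt_id z).const_mul ((r - μ) / (lam + r - μ))).sub_const (r * κ / (lam + r))
  refine eq_zero_and_deriv_eq_zero_of_hasDerivAt_wronskian (W := fun z => w * s' z) hF_deriv ?_
    (hasDerivAt_rpow_cross_sub_deriv (p := -β - ν) (q := β - ν) ha) ?_ (by rw [hG]; ring) ?_ ?_ hH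
  · filter_upwards [eventually_gt_nhds ha] with z hz
    rw [hG_eq]
    exact hasDerivAt_rpow_cross_sub hz
  · rw [hW_eq]
    exact (hasDerivAt_rpow_const (Or.inl ha.ne')).const_mul _
  · exact (rpow_cross_sub_deriv_self ha).trans (congrFun hW_eq a).symm
  · rw [hw, hs]
    positivity

theorem stmt_5 (μ σ r lam κ c : ℝ) (hσ : 0 < σ) (hlam : 0 < lam) (hκ : 0 < κ) (hc : 0 ≤ c)
    (hlr : max μ 0 < lam + r)
    (ν : ℝ) (hν : ν = μ / σ ^ 2 - 1 / 2)
    (φ ψ F G s' H : ℝ → ℝ) (w : ℝ)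
    (hφ : ∀ x : ℝ, φ x = x ^ (-Real.sqrt (ν ^ 2 + 2 * (lam + r) / σ ^ 2) - ν))
    (hψ : ∀ x : ℝ, ψ x = x ^ (Real.sqrt (ν ^ 2 + 2 * (lam + r) / σ ^ 2) - ν))
    (hF : ∀ z : ℝ, F z = ((r - μ) / (lam + r - μ)) * z - r * κ / (lam + r))
    (hG : ∀ z : ℝ, G z = φ (κ + c) * ψ z - φ z * ψ (κ + c))
    (hw : w = 2 * Real.sqrt (ν ^ 2 + 2 * (lam + r) / σ ^ 2))
    (hs : ∀ z : ℝ, s' z = z ^ (-2 * ν - 1))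
    (hH : ∀ z : ℝ, H z = (deriv F z * G z - F z * deriv G z) / (w * s' z) + F (κ + c))
    (hr : 0 ≤ r) :
    H (κ + c) = 0 ∧ deriv H (κ + c) = 0 :=
  stmt_5_general μ σ r lam κ c hσ hκ hc hlr ν φ ψ F G s' H w hφ hψ hF hG hw hs hH
end

section
/- If μ < rc/(κ+c) and r > 0, then H has a local minimum at z̄ = rκ/(r-μ) ∈ (0, κ+c), a local maximum with a root at κ+c, lim_{z↓0} H(z) = +∞, and H has exactly one root z₀ in (0, rκ/(r-μ)); moreover H has no other roots in (0,∞) besides z₀ and κ+c. -/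
/-!
Put `p = a - ν > 0 > q = -a - ν` with `a = √(ν² + 2(λ+r)/σ²)`, so that `ψ = z^p`, `φ = z^q`.
Both span the kernel of the Euler operator `z² y'' + (1 - p - q) z y' + p q y` (the discounted
generator of the geometric Brownian motion, divided by `σ²/2`), whose scale density is
`s' = z^(-(1 - p - q))`. Differentiating `H` and using this equation for `G` gives
`H'(z) = c(z) · G(z) · (z̄ - z)` with `c > 0`. As `G < 0` on `(0, κ + c)` and `G > 0` beyond,
`H` decreases on `(0, z̄]`, increases on `[z̄, κ + c]` and decreases afterwards. `G(κ + c) = 0`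
gives `H(κ + c) = 0`; near `0` the term `z^(-p)` dominates and `H → +∞`, and the intermediate
value theorem on `(0, z̄)` gives the root `z₀`.
-/

open Real Set Filter Topology

theorem strictAntiOn_of_hasDerivAt_neg {D : Set ℝ} (hD : Convex ℝ D) {f f' : ℝ → ℝ}
    (hf : ∀ x ∈ D, HasDerivAt f (f' x) x) (hf' : ∀ x ∈ interior D, f' x < 0) :
    StrictAntiOn f D :=
  strictAntiOn_of_hasDerivWithinAt_neg hD (fun x hx ↦ (hf x hx).continuousAt.continuousWithinAt)
    (fun x hx ↦ (hf x (interior_subset hx)).hasDerivWithinAt) hf'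

theorem strictMonoOn_of_hasDerivAt_pos {D : Set ℝ} (hD : Convex ℝ D) {f f' : ℝ → ℝ}
    (hf : ∀ x ∈ D, HasDerivAt f (f' x) x) (hf' : ∀ x ∈ interior D, 0 < f' x) :
    StrictMonoOn f D :=
  strictMonoOn_of_hasDerivWithinAt_pos hD (fun x hx ↦ (hf x hx).continuousAt.continuousWithinAt)
    (fun x hx ↦ (hf x (interior_subset hx)).hasDerivWithinAt) hf'

theorem exists_mem_Ioo_eq_zero_of_tendsto_atTop {f : ℝ → ℝ} {x : ℝ} (hx : 0 < x)
    (hf : ContinuousOn f (Ioc 0 x)) (hlim : Tendsto f (𝓝[>] 0) atTop) (hfx : f x < 0) :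
    ∃ z ∈ Ioo 0 x, f z = 0 := by
  obtain ⟨y, hfy, hy⟩ := ((hlim.eventually_gt_atTop 0).and (Ioo_mem_nhdsGT hx)).exists
  obtain ⟨z, hz, hfz⟩ := intermediate_value_Ioo' hy.2.le (hf.mono (Icc_subset_Ioc hy.1 le_rfl))
    ⟨hfx, hfy⟩
  exact ⟨z, ⟨hy.1.trans hz.1, hz.2⟩, hfz⟩

theorem localExtr_and_zeros_of_deriv_sign {H H' : ℝ → ℝ} {x₁ x₂ : ℝ} (hx₁ : 0 < x₁)
    (hx₁₂ : x₁ < x₂) (hH : ∀ z > 0, HasDerivAt H (H' z) z) (hneg₁ : ∀ z ∈ Ioo 0 x₁, H' z < 0)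
    (hpos : ∀ z ∈ Ioo x₁ x₂, 0 < H' z) (hneg₂ : ∀ z ∈ Ioi x₂, H' z < 0)
    (hlim : Tendsto H (𝓝[>] 0) atTop) (hx₂ : H x₂ = 0) :
    IsLocalMin H x₁ ∧ IsLocalMax H x₂ ∧
      ∃ z₀ ∈ Ioo 0 x₁, H z₀ = 0 ∧ ∀ z ∈ Ioi 0, H z = 0 → z = z₀ ∨ z = x₂ := by
  have anti₁ : StrictAntiOn H (Ioc 0 x₁) :=
    strictAntiOn_of_hasDerivAt_neg (convex_Ioc _ _) (fun z hz ↦ hH z hz.1)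
      (by simpa using hneg₁)
  have mono : StrictMonoOn H (Icc x₁ x₂) :=
    strictMonoOn_of_hasDerivAt_pos (convex_Icc _ _) (fun z hz ↦ hH z (hx₁.trans_le hz.1))
      (by simpa using hpos)
  have anti₂ : StrictAntiOn H (Ici x₂) :=
    strictAntiOn_of_hasDerivAt_neg (convex_Ici _)
      (fun z hz ↦ hH z ((hx₁.trans hx₁₂).trans_le hz)) (by simpa using hneg₂)
  have hneg : ∀ z, x₁ ≤ z → z ≠ x₂ → H z < 0 := by
    intro z hz hzx₂
    rw [← hx₂]
    rcases hzx₂.lt_or_gt with h | h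
    · exact mono ⟨hz, h.le⟩ ⟨hx₁₂.le, le_rfl⟩ h
    · exact anti₂ (mem_Ici.2 le_rfl) h.le h
  obtain ⟨z₀, hz₀, hHz₀⟩ := exists_mem_Ioo_eq_zero_of_tendsto_atTop hx₁
    (fun z hz ↦ (hH z hz.1).continuousAt.continuousWithinAt) hlim (hneg x₁ le_rfl hx₁₂.ne)
  refine ⟨isLocalMin_of_anti_mono hx₁ hx₁₂ anti₁.antitoneOn
      (mono.monotoneOn.mono Ico_subset_Icc_self),
    isLocalMax_of_mono_anti hx₁₂ (lt_add_one x₂) (mono.monotoneOn.mono Ioc_subset_Icc_self)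
      (anti₂.antitoneOn.mono Ico_subset_Ici_self), z₀, hz₀, hHz₀, fun z hz hHz ↦ ?_⟩
  by_contra! hne
  rcases le_or_gt z x₁ with h | h
  · exact hne.1 (anti₁.injOn ⟨hz, h⟩ (Ioo_subset_Ioc_self hz₀) (hHz.trans hHz₀.symm))
  · exact (hneg z h.le hne.2).ne hHz

theorem hasDerivAt_affine_wronskian_mul_rpow {y y' : ℝ → ℝ} {y'' m k e β z : ℝ} (hz : 0 < z)
    (hy : HasDerivAt y (y' z) z) (hy' : HasDerivAt y' y'' z)
    (hode : z ^ 2 * y'' + e * z * y' z = β * y z) :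
    HasDerivAt (fun x ↦ (m * y x - (m * x - k) * y' x) * x ^ e)
      (y z * (e * m * z - β * (m * z - k)) * z ^ (e - 2)) z := by
  have hF : HasDerivAt (fun x ↦ m * x - k) m z := by
    simpa using ((hasDerivAt_id z).const_mul m).sub_const k
  refine (((hy.const_mul m).fun_sub (hF.fun_mul hy')).fun_mul
    (hasDerivAt_rpow_const (p := e) (Or.inl hz.ne'))).congr_deriv ?_
  have h₂ : z ^ e = z ^ 2 * z ^ (e - 2) := by
    rw [← rpow_two, ← rpow_add hz, add_sub_cancel]
  have h₁ : z ^ (e - 1) = z * z ^ (e - 2) := by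
    rw [show e - 1 = 1 + (e - 2) by ring, rpow_add hz, rpow_one]
  rw [h₁, h₂]
  linear_combination -(m * z - k) * z ^ (e - 2) * hode

theorem euler_operator_rpow {p q z : ℝ} (hz : 0 < z) :
    z ^ 2 * (p * ((p - 1) * z ^ (p - 1 - 1))) + (1 - p - q) * z * (p * z ^ (p - 1)) =
      -(p * q) * z ^ p := by
  rw [rpow_sub_one hz.ne', rpow_sub_one hz.ne']
  field_simp
  ring

/-- `(F' y - F y') z^(1-p-q)` for `F z = m z - k` and `y z = A z^p - B z^q`; the weight
`z^(1-p-q)` is the reciprocal of the scale density of the Euler operator with solutions `z^p`,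
`z^q`. -/
noncomputable def affineWronskian (A B p q m k z : ℝ) : ℝ :=
  (m * (A * z ^ p - B * z ^ q) - (m * z - k) * (A * (p * z ^ (p - 1)) - B * (q * z ^ (q - 1)))) *
    z ^ (1 - p - q)

section

variable {A B p q m k z : ℝ}

theorem wronskian_div_scale_eq_affineWronskian (hz : 0 < z) :
    (deriv (fun x ↦ m * x - k) z * (A * z ^ p - B * z ^ q) -
        (m * z - k) * deriv (fun x ↦ A * x ^ p - B * x ^ q) z) / ((p - q) * z ^ (-(1 - p - q))) =
      affineWronskian A B p q m k z / (p - q) := by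
  have hy : deriv (fun x ↦ A * x ^ p - B * x ^ q) z =
      A * (p * z ^ (p - 1)) - B * (q * z ^ (q - 1)) :=
    (((hasDerivAt_rpow_const (Or.inl hz.ne')).const_mul A).sub
      ((hasDerivAt_rpow_const (Or.inl hz.ne')).const_mul B)).deriv
  have := (rpow_pos_of_pos hz (1 - p - q)).ne'
  rw [deriv_sub_const_fun, deriv_const_mul_id', hy, rpow_neg hz.le, affineWronskian]
  field_simp

theorem hasDerivAt_affineWronskian (hz : 0 < z) :
    HasDerivAt (affineWronskian A B p q m k)
      ((A * z ^ p - B * z ^ q) * (m * (1 - p) * (1 - q) * z - p * q * k) * z ^ (-p - q - 1)) z := by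
  have hpow : ∀ s, HasDerivAt (fun x ↦ x ^ s) (s * z ^ (s - 1)) z :=
    fun s ↦ hasDerivAt_rpow_const (Or.inl hz.ne')
  have hy := ((hpow p).const_mul A).fun_sub ((hpow q).const_mul B)
  have hy' := (((hpow (p - 1)).const_mul p).const_mul A).fun_sub
    (((hpow (q - 1)).const_mul q).const_mul B)
  have hode : z ^ 2 * (A * (p * ((p - 1) * z ^ (p - 1 - 1))) -
        B * (q * ((q - 1) * z ^ (q - 1 - 1)))) +
      (1 - p - q) * z * (A * (p * z ^ (p - 1)) - B * (q * z ^ (q - 1))) =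
        -(p * q) * (A * z ^ p - B * z ^ q) := by
    linear_combination A * euler_operator_rpow (p := p) (q := q) hz -
      B * euler_operator_rpow (p := q) (q := p) hz
  refine (hasDerivAt_affine_wronskian_mul_rpow hz hy hy' hode).congr_deriv ?_
  rw [show 1 - p - q - 2 = -p - q - 1 by ring]
  ring

theorem affineWronskian_eq_rpow_mul (hz : 0 < z) :
    affineWronskian A B p q m k z = z ^ (-p) * (A * m * (1 - p) * z ^ (p - q + 1) -
      B * m * (1 - q) * z + k * A * p * z ^ (p - q) - k * B * q) := by
  have := (rpow_pos_of_pos hz p).ne'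
  have := (rpow_pos_of_pos hz q).ne'
  simp only [affineWronskian, rpow_sub hz, rpow_add hz, rpow_neg hz.le, rpow_one]
  field_simp
  ring

theorem tendsto_affineWronskian_nhdsGT_zero (hp : 0 < p) (hqp : q < p) (hkBq : k * B * q < 0) :
    Tendsto (affineWronskian A B p q m k) (𝓝[>] 0) atTop := by
  let Q : ℝ → ℝ := fun z ↦
    A * m * (1 - p) * z ^ (p - q + 1) - B * m * (1 - q) * z + k * A * p * z ^ (p - q) - k * B * q
  have hQ : Tendsto Q (𝓝[>] 0) (𝓝 (-(k * B * q))) := by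
    have : ContinuousAt Q 0 := by
      fun_prop (disch := exact Or.inr (by linarith))
    simpa [Q, zero_rpow (by linarith : p - q + 1 ≠ 0), zero_rpow (sub_pos.2 hqp).ne']
      using this.tendsto.mono_left nhdsWithin_le_nhds
  refine ((tendsto_rpow_neg_nhdsGT_zero (neg_lt_zero.2 hp)).atTop_mul_pos (neg_pos.2 hkBq)
    hQ).congr' ?_
  filter_upwards [self_mem_nhdsWithin] with z hz using (affineWronskian_eq_rpow_mul hz).symm

theorem affineWronskian_rpow_rpow_self {b : ℝ} (hb : 0 < b) :
    affineWronskian (b ^ q) (b ^ p) p q m k b = -((m * b - k) * (p - q)) := by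
  have := (rpow_pos_of_pos hb p).ne'
  have := (rpow_pos_of_pos hb q).ne'
  simp only [affineWronskian, rpow_sub hb, rpow_one]
  field_simp
  ring

theorem rpow_mul_rpow_sub_rpow_mul_rpow {b : ℝ} (hb : 0 < b) (hz : 0 < z) :
    b ^ q * z ^ p - b ^ p * z ^ q = (b * z) ^ q * (z ^ (p - q) - b ^ (p - q)) := by
  have := (rpow_pos_of_pos hb q).ne'
  have := (rpow_pos_of_pos hz q).ne'
  rw [mul_rpow hb.le hz.le, rpow_sub hz, rpow_sub hb]
  field_simp

theorem rpow_mul_rpow_sub_rpow_mul_rpow_neg {b : ℝ} (hz : 0 < z) (hzb : z < b) (hqp : q < p) :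
    b ^ q * z ^ p - b ^ p * z ^ q < 0 := by
  rw [rpow_mul_rpow_sub_rpow_mul_rpow (hz.trans hzb) hz]
  exact mul_neg_of_pos_of_neg (rpow_pos_of_pos (mul_pos (hz.trans hzb) hz) _)
    (sub_neg.2 (rpow_lt_rpow hz.le hzb (sub_pos.2 hqp)))

theorem rpow_mul_rpow_sub_rpow_mul_rpow_pos {b : ℝ} (hb : 0 < b) (hbz : b < z) (hqp : q < p) :
    0 < b ^ q * z ^ p - b ^ p * z ^ q := by
  rw [rpow_mul_rpow_sub_rpow_mul_rpow hb (hb.trans hbz)]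
  exact mul_pos (rpow_pos_of_pos (mul_pos hb (hb.trans hbz)) _)
    (sub_pos.2 (rpow_lt_rpow hb.le hbz (sub_pos.2 hqp)))

theorem localExtr_and_zeros_of_eq_affineWronskian {b x₁ C : ℝ} {H : ℝ → ℝ} (hq : q < 0)
    (hp : 0 < p) (hk : 0 < k) (hx₁ : 0 < x₁) (hx₁b : x₁ < b) (hC : 0 < C)
    (hbracket : ∀ z, m * (1 - p) * (1 - q) * z - p * q * k = C * (x₁ - z))
    (hH : ∀ z > 0, H z = affineWronskian (b ^ q) (b ^ p) p q m k z / (p - q) + (m * b - k)) :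
    IsLocalMin H x₁ ∧ IsLocalMax H b ∧ H b = 0 ∧ Tendsto H (𝓝[>] 0) atTop ∧
      ∃ z₀ ∈ Ioo 0 x₁, H z₀ = 0 ∧ ∀ z ∈ Ioi 0, H z = 0 → z = z₀ ∨ z = b := by
  have hb : 0 < b := hx₁.trans hx₁b
  have hqp : q < p := hq.trans hp
  have hpq : 0 < p - q := sub_pos.2 hqp
  let scale : ℝ → ℝ := fun z ↦ C * z ^ (-p - q - 1) / (p - q)
  have hscale : ∀ z > 0, 0 < scale z := fun z hz ↦
    div_pos (mul_pos hC (rpow_pos_of_pos hz _)) hpq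
  have hderiv : ∀ z > 0,
      HasDerivAt H (scale z * ((b ^ q * z ^ p - b ^ p * z ^ q) * (x₁ - z))) z := by
    intro z hz
    have hW := hasDerivAt_affineWronskian (A := b ^ q) (B := b ^ p) (p := p) (q := q) (m := m)
      (k := k) hz
    refine (((hW.div_const (p - q)).add_const (m * b - k)).congr_of_eventuallyEq ?_).congr_deriv ?_
    · filter_upwards [Ioi_mem_nhds hz] with x hx using hH x hx
    · rw [hbracket]; ring
  have hHb : H b = 0 := by
    rw [hH b hb, affineWronskian_rpow_rpow_self hb]
    field_simp
    ring
  have hlim : Tendsto H (𝓝[>] 0) atTop := by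
    have hW := tendsto_affineWronskian_nhdsGT_zero (A := b ^ q) (m := m) hp hqp
      (mul_neg_of_pos_of_neg (mul_pos hk (rpow_pos_of_pos hb p)) hq)
    refine ((hW.atTop_div_const hpq).atTop_add (tendsto_const_nhds (x := m * b - k))).congr' ?_
    filter_upwards [self_mem_nhdsWithin] with z hz using (hH z hz).symm
  obtain ⟨hmin, hmax, hzeros⟩ := localExtr_and_zeros_of_deriv_sign hx₁ hx₁b hderiv
    (fun z hz ↦ mul_neg_of_pos_of_neg (hscale z hz.1) (mul_neg_of_neg_of_pos
      (rpow_mul_rpow_sub_rpow_mul_rpow_neg hz.1 (hz.2.trans hx₁b) hqp) (sub_pos.2 hz.2)))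
    (fun z hz ↦ mul_pos (hscale z (hx₁.trans hz.1)) (mul_pos_of_neg_of_neg
      (rpow_mul_rpow_sub_rpow_mul_rpow_neg (hx₁.trans hz.1) hz.2 hqp) (sub_neg.2 hz.1)))
    (fun z hz ↦ mul_neg_of_pos_of_neg (hscale z (hb.trans hz)) (mul_neg_of_pos_of_neg
      (rpow_mul_rpow_sub_rpow_mul_rpow_pos hb hz hqp) (sub_neg.2 (hx₁b.trans hz))))
    hlim hHb
  exact ⟨hmin, hmax, hHb, hlim, hzeros⟩

end

theorem mul_div_sub_mem_Ioo {μ r κ c : ℝ} (hκ : 0 < κ) (hr : 0 < r) (hrμ : 0 < r - μ)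
    (hμ : μ * (κ + c) < r * c) : r * κ / (r - μ) ∈ Ioo 0 (κ + c) :=
  ⟨by positivity, by rw [div_lt_iff₀ hrμ]; linarith⟩

theorem euler_bracket_eq {μ σ r lam κ ν a : ℝ} (hσ : 0 < σ) (hlr : 0 < lam + r)
    (hlrμ : 0 < lam + r - μ) (hrμ : 0 < r - μ) (hν : ν = μ / σ ^ 2 - 1 / 2)
    (ha : a ^ 2 = ν ^ 2 + 2 * (lam + r) / σ ^ 2) (z : ℝ) :
    (r - μ) / (lam + r - μ) * (1 - (a - ν)) * (1 - (-a - ν)) * z -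
        (a - ν) * (-a - ν) * (r * κ / (lam + r)) =
      2 * (r - μ) / σ ^ 2 * (r * κ / (r - μ) - z) := by
  have hsum : (1 - (a - ν)) * (1 - (-a - ν)) = 2 * (μ - (lam + r)) / σ ^ 2 := by
    linear_combination -ha + 2 * hν
  have hprod : (a - ν) * (-a - ν) = -(2 * (lam + r) / σ ^ 2) := by linear_combination -ha
  rw [mul_assoc ((r - μ) / (lam + r - μ)), hsum, hprod]
  field_simp
  ring

theorem stmt_7_general (μ σ r lam κ c : ℝ) (hσ : 0 < σ) (hκ : 0 < κ) (hc : 0 ≤ c)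
    (hlr : max μ 0 < lam + r)
    (ν : ℝ) (hν : ν = μ / σ ^ 2 - 1 / 2)
    (φ ψ F G s' H : ℝ → ℝ) (w : ℝ)
    (hφ : ∀ x : ℝ, φ x = x ^ (-Real.sqrt (ν ^ 2 + 2 * (lam + r) / σ ^ 2) - ν))
    (hψ : ∀ x : ℝ, ψ x = x ^ (Real.sqrt (ν ^ 2 + 2 * (lam + r) / σ ^ 2) - ν))
    (hF : ∀ z : ℝ, F z = ((r - μ) / (lam + r - μ)) * z - r * κ / (lam + r))
    (hG : ∀ z : ℝ, G z = φ (κ + c) * ψ z - φ z * ψ (κ + c))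
    (hw : w = 2 * Real.sqrt (ν ^ 2 + 2 * (lam + r) / σ ^ 2))
    (hs : ∀ z : ℝ, s' z = z ^ (-2 * ν - 1))
    (hH : ∀ z : ℝ, H z = (deriv F z * G z - F z * deriv G z) / (w * s' z) + F (κ + c))
    (hr : 0 < r) (hμ : μ < r * c / (κ + c)) :
    r * κ / (r - μ) ∈ Set.Ioo (0 : ℝ) (κ + c) ∧
    IsLocalMin H (r * κ / (r - μ)) ∧
    IsLocalMax H (κ + c) ∧ H (κ + c) = 0 ∧
    Filter.Tendsto H (nhdsWithin 0 (Set.Ioi (0 : ℝ))) Filter.atTop ∧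
    ∃ z₀ ∈ Set.Ioo (0 : ℝ) (r * κ / (r - μ)), H z₀ = 0 ∧
      ∀ z ∈ Set.Ioi (0 : ℝ), H z = 0 → z = z₀ ∨ z = κ + c := by
  have hb : 0 < κ + c := by linarith
  have hlr₀ : 0 < lam + r := (le_max_right μ 0).trans_lt hlr
  have hlrμ : 0 < lam + r - μ := sub_pos.2 ((le_max_left μ 0).trans_lt hlr)
  have hμb : μ * (κ + c) < r * c := (lt_div_iff₀ hb).1 hμ
  have hrμ : 0 < r - μ := by nlinarith
  have hzbar := mul_div_sub_mem_Ioo hκ hr hrμ hμb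
  set a := √(ν ^ 2 + 2 * (lam + r) / σ ^ 2)
  have ha2 : a ^ 2 = ν ^ 2 + 2 * (lam + r) / σ ^ 2 := sq_sqrt (by positivity)
  have hνa : |ν| < a :=
    abs_lt_of_sq_lt_sq (by rw [ha2]; linarith [show 0 < 2 * (lam + r) / σ ^ 2 by positivity])
      (sqrt_nonneg _)
  set p := a - ν with hp
  set q := -a - ν with hq
  set m := (r - μ) / (lam + r - μ)
  set k := r * κ / (lam + r)
  have hGeq : G = fun x ↦ (κ + c) ^ q * x ^ p - (κ + c) ^ p * x ^ q :=
    funext fun x ↦ by rw [hG, hφ, hφ, hψ, hψ]; ring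
  have hHeq : ∀ z > 0, H z =
      affineWronskian ((κ + c) ^ q) ((κ + c) ^ p) p q m k z / (p - q) + (m * (κ + c) - k) := by
    intro z hz
    rw [hH, hw, hs, show 2 * a = p - q by rw [hp, hq]; ring,
      show -2 * ν - 1 = -(1 - p - q) by rw [hp, hq]; ring,
      ← wronskian_div_scale_eq_affineWronskian hz]
    simp only [show F = fun x ↦ m * x - k from funext hF, hGeq]
  exact ⟨hzbar, localExtr_and_zeros_of_eq_affineWronskian (by linarith [neg_abs_le ν])
    (by linarith [le_abs_self ν]) (by positivity) hzbar.1 hzbar.2 (by positivity)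
    (euler_bracket_eq hσ hlr₀ hlrμ hrμ hν ha2) hHeq⟩

theorem stmt_7 (μ σ r lam κ c : ℝ) (hσ : 0 < σ) (hlam : 0 < lam) (hκ : 0 < κ) (hc : 0 ≤ c)
    (hlr : max μ 0 < lam + r)
    (ν : ℝ) (hν : ν = μ / σ ^ 2 - 1 / 2)
    (φ ψ F G s' H : ℝ → ℝ) (w : ℝ)
    (hφ : ∀ x : ℝ, φ x = x ^ (-Real.sqrt (ν ^ 2 + 2 * (lam + r) / σ ^ 2) - ν))
    (hψ : ∀ x : ℝ, ψ x = x ^ (Real.sqrt (ν ^ 2 + 2 * (lam + r) / σ ^ 2) - ν))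
    (hF : ∀ z : ℝ, F z = ((r - μ) / (lam + r - μ)) * z - r * κ / (lam + r))
    (hG : ∀ z : ℝ, G z = φ (κ + c) * ψ z - φ z * ψ (κ + c))
    (hw : w = 2 * Real.sqrt (ν ^ 2 + 2 * (lam + r) / σ ^ 2))
    (hs : ∀ z : ℝ, s' z = z ^ (-2 * ν - 1))
    (hH : ∀ z : ℝ, H z = (deriv F z * G z - F z * deriv G z) / (w * s' z) + F (κ + c))
    (hr : 0 < r) (hμ : μ < r * c / (κ + c)) :
    r * κ / (r - μ) ∈ Set.Ioo (0 : ℝ) (κ + c) ∧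
    IsLocalMin H (r * κ / (r - μ)) ∧
    IsLocalMax H (κ + c) ∧ H (κ + c) = 0 ∧
    Filter.Tendsto H (nhdsWithin 0 (Set.Ioi (0 : ℝ))) Filter.atTop ∧
    ∃ z₀ ∈ Set.Ioo (0 : ℝ) (r * κ / (r - μ)), H z₀ = 0 ∧
      ∀ z ∈ Set.Ioi (0 : ℝ), H z = 0 → z = z₀ ∨ z = κ + c :=
  stmt_7_general μ σ r lam κ c hσ hκ hc hlr ν hν φ ψ F G s' H w hφ hψ hF hG hw hs hH hr hμ
end

section
/- If μ = rc/(κ+c) and r > 0, then H is strictly decreasing on (0, κ+c) and on (κ+c, ∞), and z = κ+c is its unique root (and an inflection/stationary point with H'(κ+c)=0). -/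
/-! With `φ z = z ^ q`, `ψ z = z ^ p` (`q < p` the roots of the indicial polynomial of
`ℒ = σ²/2 z² ∂² + μ z ∂ - (λ + r)`) and `s' z = z ^ (p + q - 1)`, dividing by `s'` writes `H` as
`((k/z)^q (A(1-p)z + Bp) - (k/z)^p (A(1-q)z + Bq)) / w + F k`, where `k = κ + c` and
`F z = A z - B`. Differentiating, `H'(z) = 2/(σ² w) · ((k/z)^q - (k/z)^p)/z · ℒF(z)`, and the
condition `μ = rc/k` is exactly what makes `ℒF(z) = (r - μ)(k - z)`. Hence
`H'(z) = C ((k/z)^q - (k/z)^p)(k/z - 1)` with `C > 0`, which is negative off `k` and zero at `k`: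
`H` is strictly decreasing on `(0, ∞)`, and `H k = 0` since `G k = 0` and `G' k = w s' k`. -/

open Real Set Filter

lemma hasDerivAt_div_rpow_mul_linear {k z : ℝ} (hk : k ≠ 0) (hz : z ≠ 0) (x c₁ c₀ : ℝ) :
    HasDerivAt (fun y => (k / y) ^ x * (c₁ * y + c₀))
      ((k / z) ^ x / z * ((1 - x) * c₁ * z - x * c₀)) z := by
  have hkz : k / z ≠ 0 := div_ne_zero hk hz
  have hdiv : HasDerivAt (fun y => k / y) (-k / z ^ 2) z := by
    simpa [div_eq_mul_inv, neg_div] using (hasDerivAt_inv hz).const_mul k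
  have hlin : HasDerivAt (fun y => c₁ * y + c₀) c₁ z := by
    simpa using ((hasDerivAt_id z).const_mul c₁).add_const c₀
  refine ((hdiv.rpow_const (p := x) (Or.inl hkz)).mul hlin).congr_deriv ?_
  rw [rpow_sub_one hkz]
  field_simp
  ring

lemma rpow_sub_rpow_mul_sub_one_neg {p q t : ℝ} (hqp : q < p) (ht : 0 < t) (ht1 : t ≠ 1) :
    (t ^ q - t ^ p) * (t - 1) < 0 := by
  rcases ht1.lt_or_gt with hlt | hgt
  · exact mul_neg_of_pos_of_neg (sub_pos.2 (rpow_lt_rpow_of_exponent_gt ht hlt hqp)) (by linarith)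
  · exact mul_neg_of_neg_of_pos (sub_neg.2 (rpow_lt_rpow_of_exponent_lt hgt hqp)) (by linarith)

lemma strictAntiOn_Ioi_of_hasDerivAt_neg {f f' : ℝ → ℝ} {a k : ℝ} (hak : a < k)
    (hf : ∀ x ∈ Ioi a, HasDerivAt f (f' x) x) (hf' : ∀ x ∈ Ioi a, x ≠ k → f' x < 0) :
    StrictAntiOn f (Ioi a) := by
  have hcont : ContinuousOn f (Ioi a) := fun x hx => (hf x hx).continuousAt.continuousWithinAt
  have hleft : StrictAntiOn f (Ioc a k) :=
    strictAntiOn_of_deriv_neg (convex_Ioc a k) (hcont.mono Ioc_subset_Ioi_self) fun x hx => by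
      rw [interior_Ioc] at hx
      rw [(hf x hx.1).deriv]
      exact hf' x hx.1 hx.2.ne
  have hright : StrictAntiOn f (Ici k) :=
    strictAntiOn_of_deriv_neg (convex_Ici k) (hcont.mono fun x hx => hak.trans_le hx) fun x hx => by
      rw [interior_Ici] at hx
      rw [(hf x (hak.trans hx)).deriv]
      exact hf' x (hak.trans hx) hx.ne'
  rw [← Ioc_union_Ici_eq_Ioi hak]
  exact hleft.union hright (isGreatest_Ioc hak) isLeast_Ici

noncomputable def closedFormH (p q A B k w z : ℝ) : ℝ :=
  ((k / z) ^ q * (A * (1 - p) * z + B * p) - (k / z) ^ p * (A * (1 - q) * z + B * q)) / w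
    + (A * k - B)

section closedFormH
variable {p q A B k w z : ℝ}

lemma closedFormH_self (hk : k ≠ 0) (hpq : p ≠ q) : closedFormH p q A B k (p - q) k = 0 := by
  have : p - q ≠ 0 := sub_ne_zero.2 hpq
  simp only [closedFormH, div_self hk, one_rpow]
  field_simp
  ring

lemma hasDerivAt_closedFormH (hk : k ≠ 0) (hz : z ≠ 0) :
    HasDerivAt (closedFormH p q A B k w)
      (((k / z) ^ q - (k / z) ^ p) / z * (A * (1 - p) * (1 - q) * z - p * q * B) / w) z := by
  have hq := hasDerivAt_div_rpow_mul_linear hk hz q (A * (1 - p)) (B * p)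
  have hp := hasDerivAt_div_rpow_mul_linear hk hz p (A * (1 - q)) (B * q)
  exact (((hq.sub hp).div_const w).add_const (A * k - B)).congr_deriv (by ring)

lemma wronskian_quotient_eq_closedFormH (hk : 0 < k) (hz : 0 < z) :
    (A * (k ^ q * z ^ p - z ^ q * k ^ p)
        - (A * z - B) * (k ^ q * (p * z ^ (p - 1)) - q * z ^ (q - 1) * k ^ p))
      / (w * z ^ (p + q - 1)) + (A * k - B) = closedFormH p q A B k w z := by
  have hz' := hz.ne'
  simp only [closedFormH, div_rpow hk.le hz.le, rpow_sub_one hz', rpow_add hz]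
  have := (rpow_pos_of_pos hz p).ne'
  have := (rpow_pos_of_pos hz q).ne'
  field_simp
  ring

lemma hasDerivAt_closedFormH_eq_generator {σ μ β ν : ℝ} (hσ : σ ≠ 0)
    (hν : ν = μ / σ ^ 2 - 1 / 2) (hsum : p + q = -2 * ν) (hprod : p * q = -2 * β / σ ^ 2)
    (hk : k ≠ 0) (hz : z ≠ 0) :
    HasDerivAt (closedFormH p q A B k w)
      (2 / (σ ^ 2 * w) * (((k / z) ^ q - (k / z) ^ p) / z) * (μ * z * A - β * (A * z - B)))
      z := by
  refine (hasDerivAt_closedFormH hk hz).congr_deriv ?_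
  have h : (1 - p) * (1 - q) = 1 - (p + q) + p * q := by ring
  rw [mul_assoc A, h, hsum, hprod, hν]
  field_simp
  ring

lemma eq_closedFormH_of_wronskian {φ ψ F G s' H : ℝ → ℝ} (hk : 0 < k) (hz : 0 < z)
    (hφ : ∀ x, φ x = x ^ q) (hψ : ∀ x, ψ x = x ^ p) (hF : ∀ x, F x = A * x - B)
    (hG : ∀ x, G x = φ k * ψ x - φ x * ψ k) (hs : ∀ x, s' x = x ^ (p + q - 1))
    (hH : ∀ x, H x = (deriv F x * G x - F x * deriv G x) / (w * s' x) + F k) :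
    H z = closedFormH p q A B k w z := by
  have hF' : HasDerivAt F A z := by
    rw [funext hF]
    simpa using ((hasDerivAt_id z).const_mul A).sub_const B
  have hG' : HasDerivAt G (k ^ q * (p * z ^ (p - 1)) - q * z ^ (q - 1) * k ^ p) z := by
    rw [funext fun x => (hG x).trans (by rw [hφ, hψ, hφ, hψ])]
    exact ((hasDerivAt_rpow_const (Or.inl hz.ne')).const_mul _).sub
      ((hasDerivAt_rpow_const (Or.inl hz.ne')).mul_const _)
  rw [← wronskian_quotient_eq_closedFormH hk hz, hH, hF'.deriv, hG'.deriv, hG, hφ, hψ, hφ, hψ,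
    hs, hF z, hF k]

lemma hasDerivAt_closedFormH_ratio {σ μ β ν r κ : ℝ} (hσ : σ ≠ 0)
    (hν : ν = μ / σ ^ 2 - 1 / 2) (hsum : p + q = -2 * ν) (hprod : p * q = -2 * β / σ ^ 2)
    (hpq : p ≠ q) (hβ : β ≠ 0) (hβμ : β - μ ≠ 0) (hrμ : (r - μ) * k = r * κ)
    (hk : k ≠ 0) (hz : z ≠ 0) :
    HasDerivAt (closedFormH p q ((r - μ) / (β - μ)) (r * κ / β) k (p - q))
      (2 * (r - μ) / (σ ^ 2 * (p - q)) * (((k / z) ^ q - (k / z) ^ p) * (k / z - 1))) z := by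
  refine (hasDerivAt_closedFormH_eq_generator hσ hν hsum hprod hk hz).congr_deriv ?_
  have hA : (r - μ) / (β - μ) * (β - μ) = r - μ := div_mul_cancel₀ _ hβμ
  have hB : r * κ / β * β = r * κ := div_mul_cancel₀ _ hβ
  rw [show μ * z * ((r - μ) / (β - μ)) - β * ((r - μ) / (β - μ) * z - r * κ / β)
      = (r - μ) * (k - z) by linear_combination (-z) * hA + hB - hrμ]
  have := sub_ne_zero.2 hpq
  field_simp

end closedFormH

theorem stmt_8_general (μ σ r lam κ c : ℝ) (hσ : 0 < σ) (hκ : 0 < κ) (hc : 0 ≤ c)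
    (hlr : max μ 0 < lam + r)
    (ν : ℝ) (hν : ν = μ / σ ^ 2 - 1 / 2)
    (φ ψ F G s' H : ℝ → ℝ) (w : ℝ)
    (hφ : ∀ x : ℝ, φ x = x ^ (-Real.sqrt (ν ^ 2 + 2 * (lam + r) / σ ^ 2) - ν))
    (hψ : ∀ x : ℝ, ψ x = x ^ (Real.sqrt (ν ^ 2 + 2 * (lam + r) / σ ^ 2) - ν))
    (hF : ∀ z : ℝ, F z = ((r - μ) / (lam + r - μ)) * z - r * κ / (lam + r))
    (hG : ∀ z : ℝ, G z = φ (κ + c) * ψ z - φ z * ψ (κ + c))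
    (hw : w = 2 * Real.sqrt (ν ^ 2 + 2 * (lam + r) / σ ^ 2))
    (hs : ∀ z : ℝ, s' z = z ^ (-2 * ν - 1))
    (hH : ∀ z : ℝ, H z = (deriv F z * G z - F z * deriv G z) / (w * s' z) + F (κ + c))
    (hr : 0 < r) (hμ : μ = r * c / (κ + c)) :
    StrictAntiOn H (Set.Ioo (0 : ℝ) (κ + c)) ∧
    StrictAntiOn H (Set.Ioi (κ + c)) ∧
    H (κ + c) = 0 ∧
    (∀ z ∈ Set.Ioi (0 : ℝ), H z = 0 → z = κ + c) ∧
    deriv H (κ + c) = 0 := by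
  have hk : 0 < κ + c := by linarith
  have hβ : 0 < lam + r := (le_max_right μ 0).trans_lt hlr
  have hβμ : lam + r - μ ≠ 0 := (sub_pos.2 ((le_max_left μ 0).trans_lt hlr)).ne'
  have hrμ : (r - μ) * (κ + c) = r * κ := by rw [hμ]; field_simp; ring
  have hdisc : 0 < ν ^ 2 + 2 * (lam + r) / σ ^ 2 := by positivity
  set a := Real.sqrt (ν ^ 2 + 2 * (lam + r) / σ ^ 2)
  have hqp : -a - ν < a - ν := by linarith [sqrt_pos.2 hdisc]
  have hsum : (a - ν) + (-a - ν) = -2 * ν := by ring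
  have hprod : (a - ν) * (-a - ν) = -2 * (lam + r) / σ ^ 2 := by
    linear_combination -(sq_sqrt hdisc.le)
  rw [show 2 * a = (a - ν) - (-a - ν) by ring] at hw
  rw [show -2 * ν - 1 = (a - ν) + (-a - ν) - 1 by ring] at hs
  generalize a - ν = p at *
  generalize -a - ν = q at *
  subst hw
  set k := κ + c
  have hHval : ∀ z ∈ Ioi 0, H z = closedFormH p q _ _ k (p - q) z :=
    fun z hz => eq_closedFormH_of_wronskian hk hz hφ hψ hF hG hs hH
  have hD : ∀ z ∈ Ioi 0, HasDerivAt H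
      (2 * (r - μ) / (σ ^ 2 * (p - q)) * (((k / z) ^ q - (k / z) ^ p) * (k / z - 1))) z :=
    fun z (hz : 0 < z) => (hasDerivAt_closedFormH_ratio hσ.ne' hν hsum hprod hqp.ne' hβ.ne' hβμ
      hrμ hk.ne' hz.ne').congr_of_eventuallyEq (eventually_of_mem (Ioi_mem_nhds hz) hHval)
  have hC : 0 < 2 * (r - μ) / (σ ^ 2 * (p - q)) := by
    have : 0 < r - μ := pos_of_mul_pos_left (hrμ ▸ mul_pos hr hκ) hk.le
    exact div_pos (by positivity) (mul_pos (by positivity) (sub_pos.2 hqp))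
  have hanti : StrictAntiOn H (Ioi 0) :=
    strictAntiOn_Ioi_of_hasDerivAt_neg hk hD fun z (hz : 0 < z) hzk => mul_neg_of_pos_of_neg hC
      (rpow_sub_rpow_mul_sub_one_neg hqp (div_pos hk hz)
        (by rwa [Ne, div_eq_one_iff_eq hz.ne', eq_comm]))
  have hHk : H k = 0 := (hHval k hk).trans (closedFormH_self hk.ne' hqp.ne')
  refine ⟨hanti.mono Ioo_subset_Ioi_self, hanti.mono fun z hz => hk.trans hz, hHk,
    fun z hz hz0 => hanti.injOn hz hk (hz0.trans hHk.symm), ?_⟩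
  rw [(hD k hk).deriv, div_self hk.ne']
  simp

theorem stmt_8 (μ σ r lam κ c : ℝ) (hσ : 0 < σ) (hlam : 0 < lam) (hκ : 0 < κ) (hc : 0 ≤ c)
    (hlr : max μ 0 < lam + r)
    (ν : ℝ) (hν : ν = μ / σ ^ 2 - 1 / 2)
    (φ ψ F G s' H : ℝ → ℝ) (w : ℝ)
    (hφ : ∀ x : ℝ, φ x = x ^ (-Real.sqrt (ν ^ 2 + 2 * (lam + r) / σ ^ 2) - ν))
    (hψ : ∀ x : ℝ, ψ x = x ^ (Real.sqrt (ν ^ 2 + 2 * (lam + r) / σ ^ 2) - ν))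
    (hF : ∀ z : ℝ, F z = ((r - μ) / (lam + r - μ)) * z - r * κ / (lam + r))
    (hG : ∀ z : ℝ, G z = φ (κ + c) * ψ z - φ z * ψ (κ + c))
    (hw : w = 2 * Real.sqrt (ν ^ 2 + 2 * (lam + r) / σ ^ 2))
    (hs : ∀ z : ℝ, s' z = z ^ (-2 * ν - 1))
    (hH : ∀ z : ℝ, H z = (deriv F z * G z - F z * deriv G z) / (w * s' z) + F (κ + c))
    (hr : 0 < r) (hμ : μ = r * c / (κ + c)) :
    StrictAntiOn H (Set.Ioo (0 : ℝ) (κ + c)) ∧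
    StrictAntiOn H (Set.Ioi (κ + c)) ∧
    H (κ + c) = 0 ∧
    (∀ z ∈ Set.Ioi (0 : ℝ), H z = 0 → z = κ + c) ∧
    deriv H (κ + c) = 0 :=
  stmt_8_general μ σ r lam κ c hσ hκ hc hlr ν hν φ ψ F G s' H w hφ hψ hF hG hw hs hH hr hμ
end

section
/- If μ ≥ r > 0, then H attains a strict global minimum at κ+c with H(κ+c) = 0, so H(z) > 0 for all z ∈ (0,∞) with z ≠ κ+c; in particular κ+c is the unique root of H. -/
open Real Set

/-!
The exponents of `φ` and `ψ` are the roots `p < q` of `σ² x (x - 1) / 2 + μ x = λ + r`, so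
`p q < 0`, and `(1 - p)(1 - q) < 0` because `μ < λ + r`. With `b = κ + c`, `F z = A z - B`
(`A ≤ 0 < B` since `μ ≥ r`) and `G z = b^p z^q - z^p b^q`, the Wronskian `F' G - F G'` is
`z^(p+q-1) K z` for an explicit sum `K` of powers of `z`, while `w s' z = (q - p) z^(p+q-1)`;
hence `H z = (K z - K b) / (q - p)`. The derivative of `K` factors as
`((b/z)^p - (b/z)^q) (A (1-p)(1-q) - B p q / z)`, whose second factor is positive and whose
first factor has the sign of `z - b`, so `K` has a strict global minimum at `b`.
-/

lemma lt_of_hasDerivAt_neg_of_pos {f f' : ℝ → ℝ} {a b : ℝ} (hab : a < b)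
    (hf : ∀ z, a < z → HasDerivAt f (f' z) z)
    (hneg : ∀ z, a < z → z < b → f' z < 0) (hpos : ∀ z, b < z → 0 < f' z)
    {z : ℝ} (hz : a < z) (hzb : z ≠ b) : f b < f z := by
  rcases hzb.lt_or_gt with hzb | hbz
  · have hanti : StrictAntiOn f (Ioc a b) := by
      refine strictAntiOn_of_hasDerivWithinAt_neg (f' := f') (convex_Ioc a b)
        (fun x hx => (hf x hx.1).continuousAt.continuousWithinAt) (fun x hx => ?_) ?_
      · rw [interior_Ioc] at hx
        exact (hf x hx.1).hasDerivWithinAt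
      · rw [interior_Ioc]
        exact fun x hx => hneg x hx.1 hx.2
    exact hanti ⟨hz, hzb.le⟩ ⟨hab, le_rfl⟩ hzb
  · have hmono : StrictMonoOn f (Ici b) := by
      refine strictMonoOn_of_hasDerivWithinAt_pos (f' := f') (convex_Ici b)
        (fun x hx => (hf x (hab.trans_le hx)).continuousAt.continuousWithinAt)
        (fun x hx => ?_) ?_
      · rw [interior_Ici] at hx
        exact (hf x (hab.trans hx)).hasDerivWithinAt
      · rw [interior_Ici]
        exact hpos
    exact hmono self_mem_Ici hbz.le hbz

lemma rpow_div_sub_rpow_div_neg {p q b z : ℝ} (hpq : p < q) (hz : 0 < z) (hzb : z < b) :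
    (b / z) ^ p - (b / z) ^ q < 0 :=
  sub_neg.mpr (rpow_lt_rpow_of_exponent_lt ((one_lt_div hz).mpr hzb) hpq)

lemma rpow_div_sub_rpow_div_pos {p q b z : ℝ} (hpq : p < q) (hb : 0 < b) (hbz : b < z) :
    0 < (b / z) ^ p - (b / z) ^ q :=
  sub_pos.mpr (rpow_lt_rpow_of_exponent_gt (div_pos hb (hb.trans hbz))
    ((div_lt_one (hb.trans hbz)).mpr hbz) hpq)

section ScaledWronskian

variable (p q A B : ℝ)

noncomputable def scaledWronskian (b z : ℝ) : ℝ :=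
  A * (1 - q) * b ^ p * z ^ (1 - p) - A * (1 - p) * b ^ q * z ^ (1 - q)
    + B * q * b ^ p * z ^ (-p) - B * p * b ^ q * z ^ (-q)

lemma rpow_add_sub_one_mul_scaledWronskian (b : ℝ) {z : ℝ} (hz : 0 < z) :
    z ^ (p + q - 1) * scaledWronskian p q A B b z
      = A * (b ^ p * z ^ q - z ^ p * b ^ q)
        - (A * z - B) * (b ^ p * (q * z ^ (q - 1)) - p * z ^ (p - 1) * b ^ q) := by
  have hzp : 0 < z ^ p := rpow_pos_of_pos hz p
  have hzq : 0 < z ^ q := rpow_pos_of_pos hz q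
  simp only [scaledWronskian, sub_eq_add_neg, rpow_add hz, rpow_neg hz.le, rpow_one]
  field_simp
  ring

lemma scaledWronskian_self {b : ℝ} (hb : 0 < b) :
    scaledWronskian p q A B b b = (q - p) * (B - A * b) := by
  have hbp : 0 < b ^ p := rpow_pos_of_pos hb p
  have hbq : 0 < b ^ q := rpow_pos_of_pos hb q
  simp only [scaledWronskian, sub_eq_add_neg, rpow_add hb, rpow_neg hb.le, rpow_one]
  field_simp
  ring

lemma hasDerivAt_scaledWronskian {b z : ℝ} (hb : 0 ≤ b) (hz : 0 < z) :
    HasDerivAt (scaledWronskian p q A B b)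
      (((b / z) ^ p - (b / z) ^ q) * (A * ((1 - p) * (1 - q)) - B * (p * q) / z)) z := by
  have hpow : ∀ e : ℝ, HasDerivAt (fun y : ℝ => y ^ e) (e * z ^ (e - 1)) z :=
    fun e => hasDerivAt_rpow_const (Or.inl hz.ne')
  have hK := ((((hpow (1 - p)).const_mul (A * (1 - q) * b ^ p)).sub
      ((hpow (1 - q)).const_mul (A * (1 - p) * b ^ q))).add
      ((hpow (-p)).const_mul (B * q * b ^ p))).sub ((hpow (-q)).const_mul (B * p * b ^ q))
  refine hK.congr_deriv ?_
  have hzp : 0 < z ^ p := rpow_pos_of_pos hz p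
  have hzq : 0 < z ^ q := rpow_pos_of_pos hz q
  simp only [sub_eq_add_neg, rpow_add hz, rpow_neg hz.le, rpow_one, div_rpow hb hz.le]
  field_simp
  ring

lemma scaledWronskian_self_lt {b z : ℝ} (hb : 0 < b) (hpq : p < q)
    (hA : 0 ≤ A * ((1 - p) * (1 - q))) (hB : B * (p * q) < 0) (hz : 0 < z) (hzb : z ≠ b) :
    scaledWronskian p q A B b b < scaledWronskian p q A B b z := by
  have hfactor : ∀ z : ℝ, 0 < z → 0 < A * ((1 - p) * (1 - q)) - B * (p * q) / z :=
    fun z hz => by linarith [div_neg_of_neg_of_pos hB hz]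
  refine lt_of_hasDerivAt_neg_of_pos hb (fun z hz => hasDerivAt_scaledWronskian p q A B hb.le hz)
    (fun z hz hzb => ?_) (fun z hbz => ?_) hz hzb
  · exact mul_neg_of_neg_of_pos (rpow_div_sub_rpow_div_neg hpq hz hzb) (hfactor z hz)
  · exact mul_pos (rpow_div_sub_rpow_div_pos hpq hb hbz) (hfactor z (hb.trans hbz))

end ScaledWronskian

lemma wronskian_div_add_eq {F G : ℝ → ℝ} {p q A B b z : ℝ} (hF : ∀ z, F z = A * z - B)
    (hG : ∀ z, G z = b ^ p * z ^ q - z ^ p * b ^ q) (hb : 0 < b) (hpq : p ≠ q) (hz : 0 < z) :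
    (deriv F z * G z - F z * deriv G z) / ((q - p) * z ^ (p + q - 1)) + F b
      = (scaledWronskian p q A B b z - scaledWronskian p q A B b b) / (q - p) := by
  have hFz : HasDerivAt F A z := by
    simpa [funext hF] using ((hasDerivAt_id z).const_mul A).sub_const B
  have hGz : HasDerivAt G (b ^ p * (q * z ^ (q - 1)) - p * z ^ (p - 1) * b ^ q) z := by
    rw [funext hG]
    exact ((hasDerivAt_rpow_const (Or.inl hz.ne')).const_mul (b ^ p)).sub
      ((hasDerivAt_rpow_const (Or.inl hz.ne')).mul_const (b ^ q))
  have hzpq : 0 < z ^ (p + q - 1) := rpow_pos_of_pos hz _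
  have hqp : q - p ≠ 0 := sub_ne_zero.mpr hpq.symm
  rw [hFz.deriv, hGz.deriv, hG, hF, hF, ← rpow_add_sub_one_mul_scaledWronskian p q A B b hz,
    scaledWronskian_self p q A B hb]
  field_simp
  ring

lemma neg_sqrt_sub_mul_sqrt_sub {ν k : ℝ} (hk : 0 ≤ k) :
    (-√(ν ^ 2 + k) - ν) * (√(ν ^ 2 + k) - ν) = -k := by
  linear_combination -sq_sqrt (by positivity : 0 ≤ ν ^ 2 + k)

lemma one_sub_neg_sqrt_sub_mul_one_sub_sqrt_sub {ν k : ℝ} (hk : 0 ≤ k) :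
    (1 - (-√(ν ^ 2 + k) - ν)) * (1 - (√(ν ^ 2 + k) - ν)) = 1 + 2 * ν - k := by
  linear_combination -sq_sqrt (by positivity : 0 ≤ ν ^ 2 + k)

theorem stmt_10_general (μ σ r lam κ c : ℝ) (hσ : 0 < σ) (hκ : 0 < κ) (hc : 0 ≤ c)
    (hlr : max μ 0 < lam + r)
    (ν : ℝ) (hν : ν = μ / σ ^ 2 - 1 / 2)
    (φ ψ F G s' H : ℝ → ℝ) (w : ℝ)
    (hφ : ∀ x : ℝ, φ x = x ^ (-Real.sqrt (ν ^ 2 + 2 * (lam + r) / σ ^ 2) - ν))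
    (hψ : ∀ x : ℝ, ψ x = x ^ (Real.sqrt (ν ^ 2 + 2 * (lam + r) / σ ^ 2) - ν))
    (hF : ∀ z : ℝ, F z = ((r - μ) / (lam + r - μ)) * z - r * κ / (lam + r))
    (hG : ∀ z : ℝ, G z = φ (κ + c) * ψ z - φ z * ψ (κ + c))
    (hw : w = 2 * Real.sqrt (ν ^ 2 + 2 * (lam + r) / σ ^ 2))
    (hs : ∀ z : ℝ, s' z = z ^ (-2 * ν - 1))
    (hH : ∀ z : ℝ, H z = (deriv F z * G z - F z * deriv G z) / (w * s' z) + F (κ + c))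
    (hr : 0 < r) (hμ : r ≤ μ) :
    H (κ + c) = 0 ∧
    ∀ z ∈ Set.Ioi (0 : ℝ), z ≠ κ + c → 0 < H z := by
  have hlr0 : 0 < lam + r := (le_max_right μ 0).trans_lt hlr
  set k := 2 * (lam + r) / σ ^ 2 with hk_def
  have hk : 0 < k := by positivity
  set p := -√(ν ^ 2 + k) - ν
  set q := √(ν ^ 2 + k) - ν
  set A := (r - μ) / (lam + r - μ)
  set B := r * κ / (lam + r)
  set b := κ + c
  have hb : 0 < b := by positivity
  have hpq : p < q := by linarith [sqrt_pos.mpr (by positivity : 0 < ν ^ 2 + k)]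
  have hA : 0 ≤ A * ((1 - p) * (1 - q)) := by
    have hμσ : μ / σ ^ 2 < (lam + r) / σ ^ 2 :=
      div_lt_div_of_pos_right ((le_max_left μ 0).trans_lt hlr) (by positivity)
    rw [one_sub_neg_sqrt_sub_mul_one_sub_sqrt_sub hk.le]
    refine mul_nonneg_of_nonpos_of_nonpos ?_ ?_
    · exact div_nonpos_of_nonpos_of_nonneg (by linarith) (by linarith [le_max_left μ 0])
    · rw [hν, hk_def, mul_div_assoc]
      linarith
  have hB : B * (p * q) < 0 := by
    rw [neg_sqrt_sub_mul_sqrt_sub hk.le]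
    exact mul_neg_of_pos_of_neg (by positivity) (neg_neg_of_pos hk)
  have hH_eq : ∀ z, 0 < z →
      H z = (scaledWronskian p q A B b z - scaledWronskian p q A B b b) / (q - p) := by
    intro z hz
    rw [hH, hw, hs, show 2 * √(ν ^ 2 + k) = q - p by ring, show -2 * ν - 1 = p + q - 1 by ring]
    exact wronskian_div_add_eq hF (fun z => by rw [hG, hφ, hψ, hφ, hψ]) hb hpq.ne hz
  refine ⟨by rw [hH_eq b hb, sub_self, zero_div], fun z hz hzb => ?_⟩
  rw [hH_eq z hz]
  exact div_pos (sub_pos.mpr (scaledWronskian_self_lt p q A B hb hpq hA hB hz hzb))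
    (sub_pos.mpr hpq)

theorem stmt_10 (μ σ r lam κ c : ℝ) (hσ : 0 < σ) (hlam : 0 < lam) (hκ : 0 < κ) (hc : 0 ≤ c)
    (hlr : max μ 0 < lam + r)
    (ν : ℝ) (hν : ν = μ / σ ^ 2 - 1 / 2)
    (φ ψ F G s' H : ℝ → ℝ) (w : ℝ)
    (hφ : ∀ x : ℝ, φ x = x ^ (-Real.sqrt (ν ^ 2 + 2 * (lam + r) / σ ^ 2) - ν))
    (hψ : ∀ x : ℝ, ψ x = x ^ (Real.sqrt (ν ^ 2 + 2 * (lam + r) / σ ^ 2) - ν))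
    (hF : ∀ z : ℝ, F z = ((r - μ) / (lam + r - μ)) * z - r * κ / (lam + r))
    (hG : ∀ z : ℝ, G z = φ (κ + c) * ψ z - φ z * ψ (κ + c))
    (hw : w = 2 * Real.sqrt (ν ^ 2 + 2 * (lam + r) / σ ^ 2))
    (hs : ∀ z : ℝ, s' z = z ^ (-2 * ν - 1))
    (hH : ∀ z : ℝ, H z = (deriv F z * G z - F z * deriv G z) / (w * s' z) + F (κ + c))
    (hr : 0 < r) (hμ : r ≤ μ) :
    H (κ + c) = 0 ∧
    ∀ z ∈ Set.Ioi (0 : ℝ), z ≠ κ + c → 0 < H z :=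
  stmt_10_general μ σ r lam κ c hσ hκ hc hlr ν hν φ ψ F G s' H w hφ hψ hF hG hw hs hH hr hμ
end

section
/- Under the condition μ < 0, r = 0, the function V̂(x) := κ - λx/(λ-μ) + (μ(κ+c)/(λ-μ))·ψ_λ(x)/ψ_λ(κ+c) satisfies V̂(x) > κ - x for all x ∈ (0, κ+c). -/
open Real Set

theorem stmt_13 (μ σ lam κ c : ℝ) (hμ : μ < 0) (hσ : 0 < σ) (hlam : 0 < lam)
    (hκ : 0 < κ) (hc : 0 ≤ c)
    (ν : ℝ) (hν : ν = μ / σ ^ 2 - 1 / 2)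
    (ψ V : ℝ → ℝ)
    (hψ : ∀ x : ℝ, ψ x = x ^ (Real.sqrt (ν ^ 2 + 2 * lam / σ ^ 2) - ν))
    (hV : ∀ x : ℝ, V x = κ - lam * x / (lam - μ)
        + (μ * (κ + c) / (lam - μ)) * (ψ x / ψ (κ + c))) :
    ∀ x ∈ Set.Ioo (0 : ℝ) (κ + c), κ - x < V x := by
  intro x hx
  obtain ⟨hx0, hx1⟩ := hx
  have hσ2 : (0:ℝ) < σ ^ 2 := by positivity
  set β := Real.sqrt (ν ^ 2 + 2 * lam / σ ^ 2) - ν with hβdef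
  have hβ : 1 < β := by
    have h2 : ν + 1 < Real.sqrt (ν ^ 2 + 2 * lam / σ ^ 2) := by
      rcases le_or_gt (ν + 1) 0 with h | h
      · have : (0:ℝ) < Real.sqrt (ν ^ 2 + 2 * lam / σ ^ 2) := by
          apply Real.sqrt_pos.mpr; positivity
        linarith
      · rw [show ν + 1 = Real.sqrt ((ν+1)^2) by rw [Real.sqrt_sq h.le]]
        apply Real.sqrt_lt_sqrt (by positivity)
        have h6 : 2 * μ / σ ^ 2 < 2 * lam / σ ^ 2 := by
          gcongr
          linarith
        have h7 : 2 * ν + 1 = 2 * μ / σ ^ 2 := by rw [hν]; ring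
        nlinarith [h6, h7]
    simp only [hβdef]; linarith
  have hκc : 0 < κ + c := by linarith
  have ht0 : 0 < x / (κ + c) := by positivity
  have ht1 : x / (κ + c) < 1 := (div_lt_one hκc).mpr hx1
  have key : (x / (κ + c)) ^ β < x / (κ + c) := by
    calc (x / (κ + c)) ^ β < (x / (κ + c)) ^ (1:ℝ) :=
          Real.rpow_lt_rpow_of_exponent_gt ht0 ht1 hβ
      _ = x / (κ + c) := Real.rpow_one _
  have hdiv : ψ x / ψ (κ + c) = (x / (κ + c)) ^ β := by
    rw [hψ, hψ, Real.div_rpow hx0.le hκc.le]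
  have hlm : 0 < lam - μ := by linarith
  rw [hV, hdiv]
  have h3 : μ * (κ + c) / (lam - μ) * ((x / (κ + c)) ^ β) >
      μ * (κ + c) / (lam - μ) * (x / (κ + c)) := by
    apply mul_lt_mul_of_neg_left key
    exact div_neg_of_neg_of_pos (mul_neg_of_neg_of_pos hμ hκc) hlm
  have h4 : μ * (κ + c) / (lam - μ) * (x / (κ + c)) = μ * x / (lam - μ) := by
    field_simp
  rw [h4] at h3
  have h5 : κ - lam * x / (lam - μ) + μ * x / (lam - μ) = κ - x := by
    field_simp; ring
  linarith
end

section
/- If μ < 0, then for V̂ defined on (0,κ+c) as above, V̂'((κ+c)-) = -λ/(λ-μ) + (μ/(λ-μ))(√(ν²+2λ/σ²)-ν) < -1, i.e. the left derivative at κ+c is strictly less than -1. -/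
/-! The exponent `s = √(ν² + 2λ/σ²) - ν` of `ψ_λ` is the positive root of the characteristic
polynomial `σ²/2 · p(p - 1) + μ p - λ`, whose value at `p = 1` is `μ - λ < 0`; hence `s > 1`.
Differentiating `V̂` at `κ + c` gives `-λ/(λ - μ) + μ s/(λ - μ)`, and since `μ < 0` this is
below `-λ/(λ - μ) + μ/(λ - μ) = -1`. -/

open Real Set

lemma one_lt_sqrt_sq_add_sub {ν b : ℝ} (h : 1 + 2 * ν < b) : 1 < √(ν ^ 2 + b) - ν := by
  have : 1 + ν < √(ν ^ 2 + b) := Real.lt_sqrt_of_sq_lt (by nlinarith)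
  linarith

lemma one_lt_sqrt_sub_of_lt {μ σ lam : ℝ} (hσ : 0 < σ) (hμlam : μ < lam) :
    1 < √((μ / σ ^ 2 - 1 / 2) ^ 2 + 2 * lam / σ ^ 2) - (μ / σ ^ 2 - 1 / 2) := by
  apply one_lt_sqrt_sq_add_sub
  have : 2 * μ / σ ^ 2 < 2 * lam / σ ^ 2 := by gcongr
  linarith [show 2 * μ / σ ^ 2 = 2 * (μ / σ ^ 2) by ring]

lemma neg_div_add_div_mul_lt_neg_one {μ lam s : ℝ} (hμ : μ < 0) (hμlam : μ < lam)
    (hs : 1 < s) : -(lam / (lam - μ)) + μ / (lam - μ) * s < -1 := by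
  have hd : 0 < lam - μ := sub_pos.mpr hμlam
  rw [show -(lam / (lam - μ)) + μ / (lam - μ) * s = (-lam + μ * s) / (lam - μ) by ring,
    div_lt_iff₀ hd]
  nlinarith

lemma hasDerivAt_rpow_div_rpow_self {a : ℝ} (ha : 0 < a) (s : ℝ) :
    HasDerivAt (fun x : ℝ => x ^ s / a ^ s) (s / a) a := by
  refine ((Real.hasDerivAt_rpow_const (p := s) (Or.inl ha.ne')).div_const (a ^ s)).congr_deriv ?_
  rw [Real.rpow_sub_one ha.ne']
  field_simp [(Real.rpow_pos_of_pos ha s).ne']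

lemma hasDerivAt_affine_add_mul_rpow_div {a : ℝ} (ha : 0 < a) (κ lam m d s : ℝ) :
    HasDerivAt (fun x : ℝ => κ - lam * x / d + m * a / d * (x ^ s / a ^ s))
      (-(lam / d) + m / d * s) a := by
  have hlin : HasDerivAt (fun x : ℝ => κ - lam * x / d) (-(lam / d)) a := by
    simpa using (((hasDerivAt_id a).const_mul lam).div_const d).const_sub κ
  refine (hlin.add ((hasDerivAt_rpow_div_rpow_self ha s).const_mul (m * a / d))).congr_deriv ?_
  field_simp

theorem stmt_15 (μ σ lam κ c : ℝ) (hμ : μ < 0) (hσ : 0 < σ) (hlam : 0 < lam)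
    (hκ : 0 < κ) (hc : 0 ≤ c)
    (ν : ℝ) (hν : ν = μ / σ ^ 2 - 1 / 2)
    (ψ V : ℝ → ℝ)
    (hψ : ∀ x : ℝ, ψ x = x ^ (Real.sqrt (ν ^ 2 + 2 * lam / σ ^ 2) - ν))
    (hV : ∀ x : ℝ, V x = κ - lam * x / (lam - μ)
        + (μ * (κ + c) / (lam - μ)) * (ψ x / ψ (κ + c))) :
    HasDerivWithinAt V
      (-(lam / (lam - μ)) + (μ / (lam - μ)) * (Real.sqrt (ν ^ 2 + 2 * lam / σ ^ 2) - ν))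
      (Set.Iio (κ + c)) (κ + c) ∧
    -(lam / (lam - μ)) + (μ / (lam - μ)) * (Real.sqrt (ν ^ 2 + 2 * lam / σ ^ 2) - ν) < -1 := by
  have hμlam : μ < lam := hμ.trans hlam
  have hV' : V = fun x => κ - lam * x / (lam - μ) + μ * (κ + c) / (lam - μ) *
      (x ^ (√(ν ^ 2 + 2 * lam / σ ^ 2) - ν) / (κ + c) ^ (√(ν ^ 2 + 2 * lam / σ ^ 2) - ν)) := by
    funext x
    rw [hV, hψ, hψ]
  refine ⟨?_, neg_div_add_div_mul_lt_neg_one hμ hμlam ?_⟩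
  · rw [hV']
    exact (hasDerivAt_affine_add_mul_rpow_div (by positivity) ..).hasDerivWithinAt
  · exact hν ▸ one_lt_sqrt_sub_of_lt hσ hμlam
end
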